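/- Let μ be a Borel probability measure on [0,1] whose support is not contained in {0,1}, and let A be a positive definite n×n complex matrix. Then the map X ↦ φ_μ(A,X) is strictly convex on the cone of positive definite n×n complex matrices. -/

import Mathlib

open MeasureTheory Matrix
open scoped ComplexOrder

/-- `f_μ(x) = ∫_{[0,1]} x / ((1-λ)x + λ) dμ(λ)`. -/
noncomputable def fmu (μ : Measure ℝ) (x : ℝ) : ℝ := ∫ l, x / ((1 - l) * x + l) ∂μ

/-- The center of mass `c(μ) = ∫_{[0,1]} λ dμ(λ)`. -/
noncomputable def cmu (μ : Measure ℝ) : ℝ := ∫ l, l ∂μ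

/-- The positive square root of a positive definite matrix, via functional calculus. -/
noncomputable def matSqrt {n : ℕ} (A : Matrix (Fin n) (Fin n) ℂ) : Matrix (Fin n) (Fin n) ℂ :=
  cfc Real.sqrt A

/-- The Kubo–Ando mean `A σ_μ B = A^{1/2} f_μ(A^{-1/2} B A^{-1/2}) A^{1/2}`. -/
noncomputable def kuboAndo {n : ℕ} (μ : Measure ℝ) (A B : Matrix (Fin n) (Fin n) ℂ) :
    Matrix (Fin n) (Fin n) ℂ :=
  matSqrt A * cfc (fmu μ) ((matSqrt A)⁻¹ * B * (matSqrt A)⁻¹) * matSqrt A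

/-- The generalized quantum Hellinger divergence
`φ_μ(A,B) = Tr((1-c(μ))A + c(μ)B - A σ_μ B)`. -/
noncomputable def qhd {n : ℕ} (μ : Measure ℝ) (A B : Matrix (Fin n) (Fin n) ℂ) : ℝ :=
  (((1 - cmu μ) • A + cmu μ • B - kuboAndo μ A B).trace).re

/-!
Diagonalizing `A^{-1/2} X A^{-1/2}` and integrating `f_μ` term by term gives
`Tr (A σ_μ X) = ∫ Tr (A !_λ X) dμ(λ)`, where `A !_λ X = X ((1-λ)X + λA)⁻¹ A` is the weighted
harmonic mean. For `0 < λ < 1` one has `Tr (A !_λ X) = (Tr A - λ Tr (A R⁻¹ A)) / (1-λ)` with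
`R = (1-λ)X + λA` affine and injective in `X`, and `R ↦ Tr (A R⁻¹ A)` is strictly convex: the
identity `Q⁻¹ = P⁻¹ - P⁻¹ΔP⁻¹ + P⁻¹ΔQ⁻¹ΔP⁻¹` (`Δ = Q - P`) shows it lies strictly above its
tangent at `P`. At `λ = 0, 1` the integrand is affine in `X`. Since the support of `μ` meets
`(0,1)`, `X ↦ Tr (A σ_μ X)` is strictly concave, and `φ_μ(A, ·)` is an affine function minus it.
-/

section Convexity

variable {E : Type*} [AddCommGroup E] [Module ℝ E] {s : Set E}

theorem strictConvexOn_of_add_linear_lt (hs : Convex ℝ s) {f : E → ℝ} (L : E → E →ₗ[ℝ] ℝ)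
    (hL : ∀ x ∈ s, ∀ y ∈ s, x ≠ y → f x + L x (y - x) < f y) : StrictConvexOn ℝ s f := by
  refine ⟨hs, fun x hx y hy hxy a b ha hb hab => ?_⟩
  set z := a • x + b • y
  have hx_sub : x - z = b • (x - y) := by
    simp only [z, eq_sub_of_add_eq hab]; module
  have hy_sub : y - z = a • (y - x) := by
    simp only [z, eq_sub_of_add_eq' hab]; module
  have hxz : z ≠ x := fun h => hxy <| sub_eq_zero.mp <|
    (smul_eq_zero.mp (hx_sub ▸ sub_eq_zero.mpr h.symm)).resolve_left hb.ne'
  have hyz : z ≠ y := fun h => hxy <| (sub_eq_zero.mp <|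
    (smul_eq_zero.mp (hy_sub ▸ sub_eq_zero.mpr h.symm)).resolve_left ha.ne').symm
  have hz : z ∈ s := hs hx hy ha.le hb.le hab
  have hLz : a * L z (x - z) + b * L z (y - z) = 0 := by
    rw [hx_sub, hy_sub, map_smul, map_smul, smul_eq_mul, smul_eq_mul, ← neg_sub y x, map_neg]
    ring
  have h₁ := mul_lt_mul_of_pos_left (hL z hz x hx hxz) ha
  have h₂ := mul_lt_mul_of_pos_left (hL z hz y hy hyz) hb
  simp only [smul_eq_mul]
  linear_combination h₁ + h₂ - hLz - f z * hab

theorem strictConcaveOn_integral {α : Type*} [MeasurableSpace α] {μ : Measure α}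
    {F : α → E → ℝ} {T : Set α} (hint : ∀ x ∈ s, Integrable (F · x) μ)
    (hconc : ∀ᵐ l ∂μ, ConcaveOn ℝ s (F l)) (hT : μ T ≠ 0)
    (hstrict : ∀ l ∈ T, StrictConcaveOn ℝ s (F l)) :
    StrictConcaveOn ℝ s (fun x => ∫ l, F l x ∂μ) := by
  obtain ⟨l₀, hl₀⟩ := nonempty_of_measure_ne_zero hT
  refine ⟨(hstrict l₀ hl₀).1, fun x hx y hy hxy a b ha hb hab => ?_⟩
  have hz : a • x + b • y ∈ s := (hstrict l₀ hl₀).1 hx hy ha.le hb.le hab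
  have hxy_int : Integrable (fun l => a * F l x + b * F l y) μ :=
    ((hint x hx).const_mul a).add ((hint y hy).const_mul b)
  have hG_pos : 0 < ∫ l, (F l (a • x + b • y) - (a * F l x + b * F l y)) ∂μ := by
    refine (integral_pos_iff_support_of_nonneg_ae ?_ ((hint _ hz).sub hxy_int)).2 ?_
    · filter_upwards [hconc] with l hl
      exact sub_nonneg.mpr (hl.2 hx hy ha.le hb.le hab)
    · refine hT.bot_lt.trans_le (measure_mono fun l hl => ?_)
      exact (sub_pos.mpr ((hstrict l hl).2 hx hy hxy ha hb hab)).ne'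
  rw [integral_sub (hint _ hz) hxy_int, integral_add ((hint x hx).const_mul a)
    ((hint y hy).const_mul b), integral_const_mul, integral_const_mul] at hG_pos
  simp only [smul_eq_mul]
  linarith

end Convexity

namespace Matrix

variable {ι κ 𝕜 : Type*} [RCLike 𝕜]

lemma convex_setOf_posDef : Convex ℝ {X : Matrix ι ι 𝕜 | X.PosDef} :=
  convex_iff_forall_pos.2 fun _ hX _ hY _ _ ha hb _ => (hX.smul ha).add (hY.smul hb)

lemma PosDef.one_sub_smul_add_smul {A W : Matrix ι ι 𝕜} (hW : W.PosDef) (hA : A.PosDef) {l : ℝ}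
    (hl : l ∈ Set.Icc 0 1) :
    ((1 - l) • W + l • A).PosDef :=
  convex_setOf_posDef hW hA (sub_nonneg.2 hl.2) hl.1 (sub_add_cancel 1 l)

variable [Fintype ι] [Fintype κ]

lemma PosDef.eq_zero_of_conjTranspose_mul_mul_eq_zero {R : Matrix ι ι 𝕜} {N : Matrix ι κ 𝕜}
    (hR : R.PosDef) (h : Nᴴ * R * N = 0) : N = 0 := by
  refine mulVec_injective (funext fun x => ?_)
  rw [zero_mulVec]
  by_contra hx
  have hpos := hR.dotProduct_mulVec_pos hx
  rw [star_mulVec, mulVec_mulVec, dotProduct_mulVec, vecMul_vecMul, ← dotProduct_mulVec,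
    ← Matrix.mul_assoc, h] at hpos
  simp at hpos

lemma PosDef.re_trace_conjTranspose_mul_mul_pos {R : Matrix ι ι 𝕜} {N : Matrix ι κ 𝕜}
    (hR : R.PosDef) (hN : N ≠ 0) : 0 < RCLike.re (Nᴴ * R * N).trace := by
  have hPSD := hR.posSemidef.conjTranspose_mul_mul_same N
  obtain ⟨hre, him⟩ := RCLike.nonneg_iff.1 hPSD.trace_nonneg
  refine hre.lt_of_ne fun h => hN (hR.eq_zero_of_conjTranspose_mul_mul_eq_zero ?_)
  exact hPSD.trace_eq_zero_iff.1 (RCLike.ext (by simp [← h]) (by simp [him]))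

variable [DecidableEq ι]

lemma nonsing_inv_eq_sub_add {R : Type*} [CommRing R] {P Q : Matrix ι ι R} (hP : IsUnit P.det)
    (hQ : IsUnit Q.det) :
    Q⁻¹ = P⁻¹ - P⁻¹ * (Q - P) * P⁻¹ + P⁻¹ * (Q - P) * Q⁻¹ * (Q - P) * P⁻¹ := by
  have hPQ : P⁻¹ * (Q - P) * Q⁻¹ = P⁻¹ - Q⁻¹ := by
    rw [mul_sub, sub_mul, mul_assoc, mul_nonsing_inv _ hQ, nonsing_inv_mul _ hP, mul_one, one_mul]
  have hQP : Q⁻¹ * (Q - P) * P⁻¹ = P⁻¹ - Q⁻¹ := by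
    rw [mul_sub, sub_mul, nonsing_inv_mul _ hQ, one_mul, mul_assoc, mul_nonsing_inv _ hP, mul_one]
  rw [hPQ, sub_mul, sub_mul, hQP]
  abel

theorem re_trace_conj_inv_tangent_lt {P Q B : Matrix ι ι 𝕜} (hP : P.PosDef) (hQ : Q.PosDef)
    (hPQ : P ≠ Q) (hB : IsUnit B) :
    RCLike.re (Bᴴ * P⁻¹ * B).trace - RCLike.re (Bᴴ * (P⁻¹ * (Q - P) * P⁻¹) * B).trace
      < RCLike.re (Bᴴ * Q⁻¹ * B).trace := by
  set N := (Q - P) * (P⁻¹ * B)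
  have hN : N ≠ 0 := fun h =>
    hPQ (sub_eq_zero.1 (((hP.inv.isUnit.mul hB).mul_left_eq_zero).1 h)).symm
  have hexpand :
      Bᴴ * Q⁻¹ * B = Bᴴ * P⁻¹ * B - Bᴴ * (P⁻¹ * (Q - P) * P⁻¹) * B + Nᴴ * Q⁻¹ * N := by
    simp only [N]
    conv_lhs => rw [nonsing_inv_eq_sub_add hP.det_pos.ne'.isUnit hQ.det_pos.ne'.isUnit]
    rw [conjTranspose_mul, conjTranspose_mul, hP.isHermitian.inv.eq,
      (hQ.isHermitian.sub hP.isHermitian).eq]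
    generalize Q - P = D
    simp only [mul_add, add_mul, mul_sub, sub_mul, mul_assoc]
  rw [hexpand, trace_add, trace_sub, map_add, map_sub]
  linarith [hQ.inv.re_trace_conjTranspose_mul_mul_pos hN]

end Matrix

section HarmonicMean

open Matrix

variable {ι 𝕜 : Type*} [Fintype ι] [DecidableEq ι] [RCLike 𝕜] {A W : Matrix ι ι 𝕜} {l : ℝ}

/-- `W ((1-λ)W + λA)⁻¹ A = ((1-λ)A⁻¹ + λW⁻¹)⁻¹` is the weighted harmonic mean of `A` and `W`,
i.e. the Kubo–Ando mean `A σ_{δ_λ} W` of the point mass at `λ`. -/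
noncomputable def traceHarmonicMean (l : ℝ) (A W : Matrix ι ι 𝕜) : ℝ :=
  RCLike.re (W * ((1 - l) • W + l • A)⁻¹ * A).trace

lemma traceHarmonicMean_eq (hA : A.PosDef) (hW : W.PosDef) (hl : l ∈ Set.Ico 0 1) :
    traceHarmonicMean l A W = (RCLike.re A.trace
      - l * RCLike.re (A * ((1 - l) • W + l • A)⁻¹ * A).trace) / (1 - l) := by
  have hl₁ : 1 - l ≠ 0 := (sub_pos.2 hl.2).ne'
  have hR := hW.one_sub_smul_add_smul hA (Set.Ico_subset_Icc_self hl)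
  set R := (1 - l) • W + l • A
  have hWR : W = (1 - l)⁻¹ • (R - l • A) := by
    rw [add_sub_cancel_right, smul_smul, inv_mul_cancel₀ hl₁, one_smul]
  have hmat : W * R⁻¹ * A = (1 - l)⁻¹ • (A - l • (A * R⁻¹ * A)) := by
    conv_lhs => rw [hWR]
    rw [smul_mul, smul_mul, sub_mul, sub_mul, mul_nonsing_inv _ hR.det_pos.ne'.isUnit, one_mul,
      smul_mul, smul_mul]
  rw [traceHarmonicMean, hmat, trace_smul, trace_sub, trace_smul, RCLike.smul_re, map_sub,
    RCLike.smul_re, div_eq_inv_mul]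

theorem strictConcaveOn_traceHarmonicMean (hA : A.PosDef) (hl : l ∈ Set.Ioo 0 1) :
    StrictConcaveOn ℝ {W : Matrix ι ι 𝕜 | W.PosDef} (traceHarmonicMean l A) := by
  have hl₁ : 0 < 1 - l := sub_pos.2 hl.2
  let R : Matrix ι ι 𝕜 → Matrix ι ι 𝕜 := fun X => (1 - l) • X + l • A
  -- `-(λ • T X)` is the derivative of `-traceHarmonicMean λ A` at `X`.
  let T : Matrix ι ι 𝕜 → Matrix ι ι 𝕜 →ₗ[ℝ] ℝ := fun X =>
    RCLike.reLm ∘ₗ traceLinearMap ι ℝ 𝕜 ∘ₗ LinearMap.mulLeft ℝ (A * (R X)⁻¹) ∘ₗ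
      LinearMap.mulRight ℝ ((R X)⁻¹ * A)
  rw [← neg_strictConvexOn_iff]
  have hc : Convex ℝ {W : Matrix ι ι 𝕜 | W.PosDef} := convex_setOf_posDef
  refine strictConvexOn_of_add_linear_lt hc (fun X => -(l • T X)) fun X hX Y hY hXY => ?_
  have hRX : (R X).PosDef := hX.one_sub_smul_add_smul hA (Set.Ioo_subset_Icc_self hl)
  have hRY : (R Y).PosDef := hY.one_sub_smul_add_smul hA (Set.Ioo_subset_Icc_self hl)
  have hRXY : R X ≠ R Y := fun h => hXY (smul_right_injective _ hl₁.ne' (add_right_cancel h))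
  have hRYX : R Y - R X = (1 - l) • (Y - X) := by simp only [R]; module
  have hT : ∀ Δ, T X Δ = RCLike.re (Aᴴ * ((R X)⁻¹ * Δ * (R X)⁻¹) * A).trace := fun Δ => by
    simp [T, hA.isHermitian.eq, mul_assoc]
  have key := re_trace_conj_inv_tangent_lt hRX hRY hRXY hA.isUnit
  rw [← hT, hRYX, map_smul, smul_eq_mul, hA.isHermitian.eq] at key
  simp only [Pi.neg_apply, LinearMap.neg_apply, LinearMap.smul_apply, smul_eq_mul,
    traceHarmonicMean_eq hA hX (Set.Ioo_subset_Ico_self hl),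
    traceHarmonicMean_eq hA hY (Set.Ioo_subset_Ico_self hl)]
  generalize RCLike.re (A * (R X)⁻¹ * A).trace = gX at key ⊢
  generalize RCLike.re (A * (R Y)⁻¹ * A).trace = gY at key ⊢
  generalize T X (Y - X) = τ at key ⊢
  refine sub_pos.1 ((div_pos (mul_pos hl.1 (sub_pos.2 key)) hl₁).trans_eq ?_)
  field_simp
  ring

theorem concaveOn_traceHarmonicMean (hA : A.PosDef) (hl : l ∈ Set.Icc 0 1) :
    ConcaveOn ℝ {W : Matrix ι ι 𝕜 | W.PosDef} (traceHarmonicMean l A) := by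
  have hc : Convex ℝ {W : Matrix ι ι 𝕜 | W.PosDef} := convex_setOf_posDef
  rcases hl.1.eq_or_lt with rfl | hl₀
  · refine (concaveOn_const (RCLike.re A.trace) hc).congr fun W hW => ?_
    simp [traceHarmonicMean, mul_nonsing_inv _ hW.det_pos.ne'.isUnit]
  rcases hl.2.eq_or_lt with rfl | hl₁
  · refine ((RCLike.reLm ∘ₗ traceLinearMap ι ℝ 𝕜).concaveOn hc).congr fun W hW => ?_
    simp [traceHarmonicMean, mul_assoc, nonsing_inv_mul _ hA.det_pos.ne'.isUnit]
  exact (strictConcaveOn_traceHarmonicMean hA ⟨hl₀, hl₁⟩).concaveOn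

lemma mul_conj_inv_one_sub_smul_add_smul_mul {S : Matrix ι ι 𝕜} (hS : IsUnit S.det) :
    S * (S⁻¹ * W * S⁻¹ * ((1 - l) • (S⁻¹ * W * S⁻¹) + l • 1)⁻¹) * S
      = W * ((1 - l) • W + l • (S * S))⁻¹ * (S * S) := by
  have hconj :
      (1 - l) • (S⁻¹ * W * S⁻¹) + l • 1 = S⁻¹ * ((1 - l) • W + l • (S * S)) * S⁻¹ := by
    simp only [mul_add, add_mul, Matrix.mul_smul, Matrix.smul_mul, mul_assoc,
      nonsing_inv_mul_cancel_left S _ hS, mul_nonsing_inv S hS]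
  rw [hconj, Matrix.mul_inv_rev, Matrix.mul_inv_rev, nonsing_inv_nonsing_inv S hS]
  simp only [mul_assoc, mul_nonsing_inv_cancel_left S _ hS, nonsing_inv_mul_cancel_left S _ hS]

end HarmonicMean

section FunctionalCalculus

open Matrix

variable {ι 𝕜 : Type*} [Fintype ι] [DecidableEq ι] [RCLike 𝕜]

lemma Matrix.PosDef.pos_of_mem_spectrum {M : Matrix ι ι 𝕜} (hM : M.PosDef) {x : ℝ}
    (hx : x ∈ spectrum ℝ M) : 0 < x := by
  obtain ⟨i, rfl⟩ := hM.isHermitian.spectrum_real_eq_range_eigenvalues ▸ hx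
  exact hM.eigenvalues_pos i

lemma Matrix.PosSemidef.nonneg_of_mem_spectrum {M : Matrix ι ι 𝕜} (hM : M.PosSemidef) {x : ℝ}
    (hx : x ∈ spectrum ℝ M) : 0 ≤ x := by
  obtain ⟨i, rfl⟩ := hM.isHermitian.spectrum_real_eq_range_eigenvalues ▸ hx
  exact hM.eigenvalues_nonneg i

lemma Matrix.IsHermitian.trace_cfc_mul {M : Matrix ι ι 𝕜} (hM : M.IsHermitian) (f : ℝ → ℝ)
    (B : Matrix ι ι 𝕜) :
    (cfc f M * B).trace = ∑ i, (f (hM.eigenvalues i) : 𝕜) *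
      (star (hM.eigenvectorUnitary : Matrix ι ι 𝕜) * B * hM.eigenvectorUnitary) i i := by
  rw [hM.cfc_eq f, IsHermitian.cfc, Unitary.conjStarAlgAut_apply, mul_assoc, trace_mul_comm,
    ← mul_assoc, trace_mul_comm, trace]
  refine Finset.sum_congr rfl fun i _ => ?_
  simp [diagonal_mul, mul_assoc]

variable {α : Type*} [MeasurableSpace α] {μ : Measure α}

lemma Matrix.IsHermitian.integrable_trace_cfc_mul {M : Matrix ι ι 𝕜} (hM : M.IsHermitian)
    (B : Matrix ι ι 𝕜) {f : α → ℝ → ℝ} (hf : ∀ x ∈ spectrum ℝ M, Integrable (f · x) μ) :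
    Integrable (fun l => (cfc (f l) M * B).trace) μ := by
  simp only [hM.trace_cfc_mul]
  exact integrable_finsetSum _ fun i _ =>
    (hf _ (hM.eigenvalues_mem_spectrum_real i)).ofReal.mul_const _

lemma Matrix.IsHermitian.integral_trace_cfc_mul {M : Matrix ι ι 𝕜} (hM : M.IsHermitian)
    (B : Matrix ι ι 𝕜) {f : α → ℝ → ℝ} (hf : ∀ x ∈ spectrum ℝ M, Integrable (f · x) μ) :
    ∫ l, (cfc (f l) M * B).trace ∂μ = (cfc (fun x => ∫ l, f l x ∂μ) M * B).trace := by
  simp only [hM.trace_cfc_mul]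
  rw [integral_finsetSum _ fun i _ =>
    (hf _ (hM.eigenvalues_mem_spectrum_real i)).ofReal.mul_const _]
  simp only [integral_mul_const, integral_ofReal]

lemma Matrix.PosDef.cfc_div_one_sub_mul_add {M : Matrix ι ι 𝕜} (hM : M.PosDef) {l : ℝ}
    (hl : l ∈ Set.Icc 0 1) :
    cfc (fun x => x / ((1 - l) * x + l)) M = M * ((1 - l) • M + l • 1)⁻¹ := by
  have hM' : IsSelfAdjoint M := hM.isHermitian
  have hden : ∀ x ∈ spectrum ℝ M, (1 - l) * x + l ≠ 0 := fun x hx => by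
    have := hM.pos_of_mem_spectrum hx
    rcases hl.1.eq_or_lt with rfl | hl₀
    · simpa using this.ne'
    · nlinarith [hl.2]
  rw [cfc_map_div _ _ M hden, cfc_add_const l _ M, cfc_const_mul (1 - l) _ M, cfc_id' ℝ M,
    Algebra.algebraMap_eq_smul_one, nonsing_inv_eq_ringInverse]

end FunctionalCalculus

section KuboAndo

open Matrix

variable {n : ℕ}

lemma matSqrt_mul_self {A : Matrix (Fin n) (Fin n) ℂ} (hA : A.PosSemidef) :
    matSqrt A * matSqrt A = A := by
  have hA' : IsSelfAdjoint A := hA.isHermitian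
  rw [matSqrt, ← cfc_mul ..]
  conv_rhs => rw [← cfc_id' ℝ A]
  exact cfc_congr fun x hx => Real.mul_self_sqrt (hA.nonneg_of_mem_spectrum hx)

lemma integrable_div_one_sub_mul_add {μ : Measure ℝ} [IsFiniteMeasure μ]
    (hμ : ∀ᵐ l ∂μ, l ∈ Set.Icc (0 : ℝ) 1) {x : ℝ} (hx : 0 < x) :
    Integrable (fun l => x / ((1 - l) * x + l)) μ := by
  refine Integrable.of_bound (by fun_prop : Measurable _).aestronglyMeasurable (x / min x 1) ?_
  filter_upwards [hμ] with l hl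
  have hmin : min x 1 ≤ (1 - l) * x + l := by
    nlinarith [mul_nonneg (sub_nonneg.2 hl.2) (sub_nonneg.2 (min_le_left x 1)),
      mul_nonneg hl.1 (sub_nonneg.2 (min_le_right x 1))]
  have hmin_pos : 0 < min x 1 := lt_min hx one_pos
  rw [Real.norm_of_nonneg (div_nonneg hx.le (hmin_pos.trans_le hmin).le)]
  exact div_le_div_of_nonneg_left hx.le hmin_pos hmin

theorem re_trace_kuboAndo_eq_integral {μ : Measure ℝ} [IsFiniteMeasure μ]
    (hμ : ∀ᵐ l ∂μ, l ∈ Set.Icc (0 : ℝ) 1) {A W : Matrix (Fin n) (Fin n) ℂ} (hA : A.PosDef)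
    (hW : W.PosDef) :
    Integrable (fun l => traceHarmonicMean l A W) μ ∧
      (kuboAndo μ A W).trace.re = ∫ l, traceHarmonicMean l A W ∂μ := by
  set S := matSqrt A
  have hSS : S * S = A := matSqrt_mul_self hA.posSemidef
  have hS : IsUnit S.det :=
    isUnit_of_mul_isUnit_left (by rw [← det_mul, hSS]; exact hA.det_pos.ne'.isUnit)
  have hSH : S.IsHermitian := cfc_predicate _ _
  set M := S⁻¹ * W * S⁻¹
  have hM : M.PosDef := by
    simpa [hSH.inv.eq] using hW.conjTranspose_mul_mul_same (B := S⁻¹)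
      (mulVec_injective_iff_isUnit.2 (isUnit_nonsing_inv_iff.2 ((isUnit_iff_isUnit_det S).2 hS)))
  have htrace : ∀ X, (S * X * S).trace = (X * A).trace := fun X => by
    rw [trace_mul_cycle, trace_mul_comm, hSS]
  have hf : ∀ x ∈ spectrum ℝ M, Integrable (fun l => x / ((1 - l) * x + l)) μ :=
    fun x hx => integrable_div_one_sub_mul_add hμ (hM.pos_of_mem_spectrum hx)
  have hint := hM.isHermitian.integrable_trace_cfc_mul A hf
  have hae : (fun l => (cfc (fun x => x / ((1 - l) * x + l)) M * A).trace.re)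
      =ᵐ[μ] fun l => traceHarmonicMean l A W := hμ.mono fun l hl => by
    dsimp only
    rw [← htrace, hM.cfc_div_one_sub_mul_add hl, mul_conj_inv_one_sub_smul_add_smul_mul hS, hSS]
    rfl
  refine ⟨hint.re.congr hae, ?_⟩
  change (S * cfc (fun x => ∫ l, x / ((1 - l) * x + l) ∂μ) M * S).trace.re = _
  rw [htrace, ← hM.isHermitian.integral_trace_cfc_mul A hf]
  exact (integral_re hint).symm.trans (integral_congr_ae hae)

end KuboAndo

lemma measure_Ioo_ne_zero_of_compl_Icc {μ : Measure ℝ} (hcompl : μ (Set.Icc (0 : ℝ) 1)ᶜ = 0)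
    (hsupp : μ ({0, 1} : Set ℝ)ᶜ ≠ 0) : μ (Set.Ioo 0 1) ≠ 0 := by
  refine fun h => hsupp (measure_mono_null (fun x hx => ?_) (measure_union_null h hcompl))
  by_cases hx' : x ∈ Set.Icc (0 : ℝ) 1
  · exact Or.inl ⟨hx'.1.lt_of_ne fun e => hx (by simp [← e]),
      hx'.2.lt_of_ne fun e => hx (by simp [e])⟩
  · exact Or.inr hx'

lemma qhd_eq {n : ℕ} (μ : Measure ℝ) (A X : Matrix (Fin n) (Fin n) ℂ) :
    qhd μ A X = (1 - cmu μ) * A.trace.re + cmu μ * X.trace.re - (kuboAndo μ A X).trace.re := by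
  simp [qhd, trace_sub, trace_add, trace_smul]

/-- If the support of `μ` is not contained in `{0,1}`, then for every positive
definite `A` the map `X ↦ φ_μ(A,X)` is strictly convex on the cone of positive definite
matrices. -/
theorem qhd_strictConvexOn {n : ℕ} (μ : Measure ℝ) [IsProbabilityMeasure μ]
    (hμ01 : μ (Set.Icc (0 : ℝ) 1) = 1) (hsupp : μ ({0, 1} : Set ℝ)ᶜ ≠ 0)
    (A : Matrix (Fin n) (Fin n) ℂ) (hA : A.PosDef) :
    StrictConvexOn ℝ {X : Matrix (Fin n) (Fin n) ℂ | X.PosDef} (fun X => qhd μ A X) := by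
  have hcompl : μ (Set.Icc (0 : ℝ) 1)ᶜ = 0 := (prob_compl_eq_zero_iff measurableSet_Icc).2 hμ01
  have hae : ∀ᵐ l ∂μ, l ∈ Set.Icc (0 : ℝ) 1 := mem_ae_iff.2 hcompl
  have hc : Convex ℝ {X : Matrix (Fin n) (Fin n) ℂ | X.PosDef} := convex_setOf_posDef
  have hconc : StrictConcaveOn ℝ {X | X.PosDef} fun X => ∫ l, traceHarmonicMean l A X ∂μ :=
    strictConcaveOn_integral (fun X hX => (re_trace_kuboAndo_eq_integral hae hA hX).1)
      (hae.mono fun l hl => concaveOn_traceHarmonicMean hA hl)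
      (measure_Ioo_ne_zero_of_compl_Icc hcompl hsupp)
      fun l hl => strictConcaveOn_traceHarmonicMean hA hl
  have haff : ConvexOn ℝ {X | X.PosDef} fun X : Matrix (Fin n) (Fin n) ℂ =>
      cmu μ * X.trace.re + (1 - cmu μ) * A.trace.re :=
    ((cmu μ • (Complex.reLm ∘ₗ traceLinearMap (Fin n) ℝ ℂ)).convexOn hc).add_const _
  refine (haff.add_strictConvexOn hconc.neg).congr fun X hX => ?_
  simp only [qhd_eq, (re_trace_kuboAndo_eq_integral hae hA hX).2, Pi.add_apply, Pi.neg_apply]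
  ring
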